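/- arXiv:1703.00107 — 2 statements merged into one kernel-verified Lean document; each statement's English description precedes it below -/
import Mathlib

section
/- Any commutative ring R containing an infinite noetherian subring is n-rigid for every positive integer n. -/
open Function in
/-- Any infinite noetherian commutative ring has a prime ideal with infinite quotient. -/
theorem exists_prime_infinite_quotient (S : Type*) [CommRing S] [IsNoetherianRing S]
    [Infinite S] : ∃ q : Ideal S, q.IsPrime ∧ Infinite (S ⧸ q) := by
  have hbot : Infinite (S ⧸ (⊥ : Ideal S)) := by
    refine Infinite.of_injective (Ideal.Quotient.mk ⊥) fun x y h => ?_
    have := Ideal.Quotient.eq.mp h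
    simpa [sub_eq_zero] using this
  obtain ⟨I₀, hI₀mem, hI₀max⟩ := (set_has_maximal_iff_noetherian.mpr ‹IsNoetherianRing S›)
      {I : Ideal S | Infinite (S ⧸ I)} ⟨⊥, hbot⟩
  haveI hIinf : Infinite (S ⧸ I₀) := hI₀mem
  refine ⟨I₀, ⟨?_, ?_⟩, hIinf⟩
  · intro htop
    haveI : Infinite (S ⧸ (⊤ : Ideal S)) := htop ▸ hIinf
    have hsub : Subsingleton (S ⧸ (⊤ : Ideal S)) := Ideal.Quotient.subsingleton_iff.mpr rfl
    exact not_subsingleton _ hsub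
  · intro a b hab
    by_contra hcon
    push_neg at hcon
    obtain ⟨ha, hb⟩ := hcon
    set Ja : Ideal S := I₀ ⊔ Ideal.span {a} with hJa
    set Jb : Ideal S := I₀ ⊔ Ideal.span {b} with hJb
    have hJaF : Finite (S ⧸ Ja) := by
      rw [← not_infinite_iff_finite]
      intro hinf
      exact hI₀max Ja hinf (SetLike.lt_iff_le_and_exists.mpr
        ⟨le_sup_left, a, Submodule.mem_sup_right (Ideal.subset_span rfl), ha⟩)
    have hJbF : Finite (S ⧸ Jb) := by
      rw [← not_infinite_iff_finite]
      intro hinf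
      exact hI₀max Jb hinf (SetLike.lt_iff_le_and_exists.mpr
        ⟨le_sup_left, b, Submodule.mem_sup_right (Ideal.subset_span rfl), hb⟩)
    set mkI := Ideal.Quotient.mk I₀
    set Nset : Set (S ⧸ I₀) := mkI '' Ja with hNset
    have hNfin : Nset.Finite := by
      have hsub : Nset ⊆ Set.range fun t : S ⧸ Jb =>
          mkI (surjInv Ideal.Quotient.mk_surjective t * a) := by
        rintro _ ⟨x, hx, rfl⟩
        obtain ⟨i, hi, y, hy, rfl⟩ := Submodule.mem_sup.mp hx
        obtain ⟨s, rfl⟩ := Ideal.mem_span_singleton'.mp hy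
        refine ⟨Ideal.Quotient.mk Jb s, ?_⟩
        have hmem : surjInv Ideal.Quotient.mk_surjective ((Ideal.Quotient.mk Jb) s) - s ∈ Jb :=
          Ideal.Quotient.eq.mp (surjInv_eq Ideal.Quotient.mk_surjective _)
        obtain ⟨i2, hi2, y2, hy2, heq⟩ := Submodule.mem_sup.mp hmem
        obtain ⟨s2, rfl⟩ := Ideal.mem_span_singleton'.mp hy2
        show mkI _ = mkI _
        rw [Ideal.Quotient.eq]
        have hs : surjInv Ideal.Quotient.mk_surjective ((Ideal.Quotient.mk Jb) s)
            = i2 + s2 * b + s := by rw [heq]; ring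
        rw [hs]
        have hexp : (i2 + s2 * b + s) * a - (i + s * a) = i2 * a + s2 * (a * b) - i := by ring
        rw [hexp]
        exact sub_mem (add_mem (Ideal.mul_mem_right a I₀ hi2)
          (Ideal.mul_mem_left I₀ s2 hab)) hi
      exact (Set.finite_range _).subset hsub
    have : Finite (S ⧸ I₀) := by
      have hNfin' : Finite Nset := hNfin.to_subtype
      set secI : S ⧸ I₀ → S := surjInv Ideal.Quotient.mk_surjective with hsecI
      set secJa : S ⧸ Ja → S := surjInv Ideal.Quotient.mk_surjective with hsecJa
      have hmemJa : ∀ x : S ⧸ I₀,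
          secI x - secJa (Ideal.Quotient.mk Ja (secI x)) ∈ Ja := fun x =>
        Ideal.Quotient.eq.mp (surjInv_eq Ideal.Quotient.mk_surjective _).symm
      set F : (S ⧸ I₀) → (S ⧸ Ja) × Nset := fun x =>
        ⟨Ideal.Quotient.mk Ja (secI x),
         ⟨mkI (secI x - secJa (Ideal.Quotient.mk Ja (secI x))),
          ⟨_, hmemJa x, rfl⟩⟩⟩ with hF
      refine Finite.of_injective F fun x y hxy => ?_
      have h1 : Ideal.Quotient.mk Ja (secI x) = Ideal.Quotient.mk Ja (secI y) :=
        congrArg Prod.fst hxy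
      have h2 : mkI (secI x - secJa (Ideal.Quotient.mk Ja (secI x)))
          = mkI (secI y - secJa (Ideal.Quotient.mk Ja (secI y))) :=
        congrArg (Subtype.val ∘ Prod.snd) hxy
      rw [h1] at h2
      have h3 : mkI (secI x) = mkI (secI y) := by
        have := congrArg (· + mkI (secJa (Ideal.Quotient.mk Ja (secI y)))) h2
        simpa [map_sub, sub_add_cancel] using this
      calc x = mkI (secI x) := (surjInv_eq Ideal.Quotient.mk_surjective x).symm
        _ = mkI (secI y) := h3
        _ = y := surjInv_eq Ideal.Quotient.mk_surjective y
    exact not_finite (S ⧸ I₀)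

/-- A commutative ring `R` is `n`-rigid if every `R`-module homomorphism
`Rⁿ → Rⁿ⁻¹` has infinite kernel. -/
def IsRigid (R : Type*) [CommRing R] (n : ℕ) : Prop :=
  ∀ f : (Fin n → R) →ₗ[R] (Fin (n - 1) → R),
    (LinearMap.ker f : Set (Fin n → R)).Infinite

open Function in
/-- Any commutative ring `R` containing an infinite noetherian
subring is `n`-rigid for every positive integer `n`. -/
theorem isRigid_of_infinite_noetherian_subring (R : Type*) [CommRing R]
    (R₀ : Subring R) (h₀ : Infinite R₀) (hnoeth : IsNoetherianRing R₀) :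
    ∀ n : ℕ, 1 ≤ n → IsRigid R n := by
  intro n hn f
  classical
  by_contra hK
  rw [Set.not_infinite] at hK
  haveI hKfin : Finite (LinearMap.ker f : Set (Fin n → R)) := hK.to_subtype
  obtain ⟨q, hq, hqinf⟩ := exists_prime_infinite_quotient R₀
  -- Step 2: every kernel element is killed by some element of R₀ outside q
  have step2 : ∀ v ∈ LinearMap.ker f, ∃ w : R₀, w ∉ q ∧ (w : R) • v = 0 := by
    intro v hv
    obtain ⟨x, y, hxy, hfe⟩ := Finite.exists_ne_map_eq_of_infinite
      (fun t : (R₀ ⧸ q) => (⟨((surjInv Ideal.Quotient.mk_surjective t : R₀) : R) • v,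
        Submodule.smul_mem _ _ hv⟩ : (LinearMap.ker f : Set (Fin n → R))))
    set sx := surjInv (Ideal.Quotient.mk_surjective (I := q)) x
    set sy := surjInv (Ideal.Quotient.mk_surjective (I := q)) y
    refine ⟨sx - sy, ?_, ?_⟩
    · intro hmem
      apply hxy
      have h1 : Ideal.Quotient.mk q sx = Ideal.Quotient.mk q sy := Ideal.Quotient.eq.mpr hmem
      exact (surjInv_eq Ideal.Quotient.mk_surjective x).symm.trans
        (h1.trans (surjInv_eq Ideal.Quotient.mk_surjective y))
    · have h2 : ((sx : R)) • v = ((sy : R)) • v := congrArg Subtype.val hfe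
      push_cast [sub_smul]
      rw [h2, sub_self]
  -- Step 3: a single element of R₀ outside q killing the whole kernel
  haveI : Fintype (LinearMap.ker f : Set (Fin n → R)) := Fintype.ofFinite _
  choose wv hwv1 hwv2 using step2
  set w : R₀ := ∏ x : (LinearMap.ker f : Set (Fin n → R)), wv x x.2 with hw
  have hwq : w ∉ q := by
    have : w ∈ q.primeCompl := Submonoid.prod_mem _ (fun x _ => hwv1 x x.2)
    exact this
  have hwkill : ∀ v ∈ LinearMap.ker f, (w : R) • v = 0 := by
    intro v hv
    have hsplit : w = wv v hv * ∏ x ∈ (Finset.univ.erase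
        (⟨v, hv⟩ : (LinearMap.ker f : Set (Fin n → R)))), wv x x.2 :=
      (Finset.mul_prod_erase Finset.univ _
        (Finset.mem_univ (⟨v, hv⟩ : (LinearMap.ker f : Set (Fin n → R))))).symm
    rw [hsplit]
    push_cast
    rw [mul_comm, mul_smul, hwv2 v hv, smul_zero]
  -- w is non-nilpotent in R
  set w₀ : R := (w : R) with hw₀
  have hw₀pow : ∀ k : ℕ, w₀ ^ k ≠ 0 := by
    intro k h
    have hk : w ^ k ∉ q := fun hmem => hwq (hq.mem_of_pow_mem _ hmem)
    apply hk
    have : (w : R) ^ k = ((w ^ k : R₀) : R) := by push_cast; ring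
    rw [hw₀] at h
    rw [this] at h
    have : (w ^ k : R₀) = 0 := Subtype.val_injective (by simpa using h)
    rw [this]
    exact q.zero_mem
  -- Localization at powers of w₀
  set A := Localization.Away w₀ with hA
  haveI : Nontrivial A := by
    rcases subsingleton_or_nontrivial A with hs | hnt
    · exfalso
      have h10 : algebraMap R A 1 = 0 := Subsingleton.elim _ _
      rw [IsLocalization.map_eq_zero_iff (Submonoid.powers w₀)] at h10
      obtain ⟨⟨m, k, hk⟩, hm⟩ := h10
      simp only [mul_one] at hm
      exact hw₀pow k (hk.trans hm)
    · exact hnt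
  set M := LinearMap.toMatrix' f with hM
  set M' := M.map (algebraMap R A) with hM'
  have hginj : ¬ Function.Injective (Matrix.toLin' M') := by
    intro hinj
    have := le_of_fin_injective A (Matrix.toLin' M') hinj
    omega
  obtain ⟨z, hz0, hzne⟩ : ∃ z : Fin n → A, Matrix.toLin' M' z = 0 ∧ z ≠ 0 := by
    rw [Function.not_injective_iff] at hginj
    obtain ⟨z1, z2, hz12, hne⟩ := hginj
    exact ⟨z1 - z2, by rw [map_sub, hz12, sub_self], sub_ne_zero.mpr hne⟩
  obtain ⟨b, hb⟩ := IsLocalization.exist_integer_multiples (Submonoid.powers w₀)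
    Finset.univ z
  choose u hu using fun i => hb i (Finset.mem_univ i)
  -- f u maps to zero in A
  have key : ∀ j, algebraMap R A (f u j) = 0 := by
    intro j
    have hfu : f u = M.mulVec u := by
      rw [hM, ← Matrix.toLin'_apply, Matrix.toLin'_toMatrix']
    rw [hfu]
    have hz0j : M'.mulVec z j = 0 := by
      rw [← Matrix.toLin'_apply, hz0]
      rfl
    have hcomp : algebraMap R A (M.mulVec u j) = algebraMap R A (b : R) * (M'.mulVec z j) := by
      simp only [Matrix.mulVec, dotProduct, map_sum, map_mul, hM', Matrix.map_apply]
      rw [Finset.mul_sum]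
      refine Finset.sum_congr rfl fun i _ => ?_
      rw [hu i, Algebra.smul_def]
      ring
    rw [hcomp, hz0j, mul_zero]
  choose km hkm using fun j =>
    (IsLocalization.map_eq_zero_iff (Submonoid.powers w₀) A _).mp (key j)
  choose e he using fun j => (km j).2
  have he' : ∀ j, w₀ ^ e j = ↑(km j) := he
  set N := Finset.univ.sup e with hN
  have hfv : f (w₀ ^ N • u) = 0 := by
    rw [map_smul]
    funext j
    show w₀ ^ N * (f u) j = 0
    have hle : e j ≤ N := Finset.le_sup (Finset.mem_univ j)
    have hpow : w₀ ^ N = w₀ ^ (N - e j) * w₀ ^ (e j) := by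
      rw [← pow_add]
      congr 1
      omega
    rw [hpow, mul_assoc, he' j, hkm j, mul_zero]
  have hker : w₀ ^ N • u ∈ LinearMap.ker f := LinearMap.mem_ker.mpr hfv
  have hkill := hwkill _ hker
  obtain ⟨i, hzi⟩ : ∃ i, z i ≠ 0 := by
    by_contra h
    push_neg at h
    exact hzne (funext h)
  have hzero : w₀ ^ (N + 1) * u i = 0 := by
    have h' : w₀ * (w₀ ^ N * u i) = 0 := congrFun hkill i
    calc w₀ ^ (N + 1) * u i = w₀ * (w₀ ^ N * u i) := by ring
      _ = 0 := h'
  have h2 : algebraMap R A (w₀ ^ (N + 1) * u i) = 0 := by rw [hzero, map_zero]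
  rw [map_mul, hu i, Algebra.smul_def] at h2
  have hu1 : IsUnit (algebraMap R A (w₀ ^ (N + 1))) :=
    IsLocalization.map_units A (⟨w₀ ^ (N + 1), ⟨N + 1, rfl⟩⟩ : Submonoid.powers w₀)
  have hu2 : IsUnit (algebraMap R A (b : R)) := IsLocalization.map_units A b
  rw [hu1.mul_right_eq_zero, hu2.mul_right_eq_zero] at h2
  exact hzi h2
end

section
/- An infinite commutative noetherian ring is n-rigid for every positive integer n. -/
open Submodule Ideal Matrix

section Finiteness

variable {R M N : Type*} [Ring R] [AddCommGroup M] [Module R M] [AddCommGroup N] [Module R N]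

theorem LinearMap.finite_of_finite_ker_of_finite_range (f : M →ₗ[R] N)
    [Finite (LinearMap.ker f)] [Finite (LinearMap.range f)] : Finite M :=
  have : Finite (M ⧸ (LinearMap.ker f).toAddSubgroup) :=
    .of_equiv _ f.quotKerEquivRange.symm.toEquiv
  Finite.of_addSubgroup_quotient (LinearMap.ker f).toAddSubgroup

theorem Submodule.finite_span_of_finite_span_singleton (s : Finset M)
    (h : ∀ x ∈ s, (R ∙ x : Set M).Finite) : (span R (s : Set M) : Set M).Finite := by
  classical
  induction s using Finset.induction_on with
  | empty => simp
  | insert x s _ ih =>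
    rw [Finset.coe_insert, span_insert, coe_sup]
    exact (h x (s.mem_insert_self x)).add (ih fun y hy => h y (s.mem_insert_of_mem hy))

theorem finite_of_finite_quotient_torsionOf [Module.Finite R M]
    (h : ∀ x : M, Finite (R ⧸ torsionOf R M x)) : Finite M := by
  obtain ⟨s, hs⟩ := Module.Finite.fg_top (R := R) (M := M)
  have hspan := finite_span_of_finite_span_singleton s fun x _ =>
    Set.finite_coe_iff.mp (.of_equiv _ (quotTorsionOfEquivSpanSingleton R M x).toEquiv)
  rw [hs, top_coe] at hspan
  exact Set.finite_univ_iff.mp hspan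

end Finiteness

section Torsion

variable {R M : Type*} [CommRing R] [AddCommGroup M] [Module R M]

theorem Ideal.torsionOf_le_torsionOf_smul (m : M) (r : R) :
    torsionOf R M m ≤ torsionOf R M (r • m) := fun t ht => by
  rw [mem_torsionOf_iff] at ht ⊢
  rw [smul_comm, ht, smul_zero]

theorem finite_quotient_torsionOf_of_smul [IsNoetherian R M] {m : M} {r : R}
    (hrm : Finite (R ⧸ torsionOf R M (r • m)))
    (hker : ∀ t : R, r • t • m = 0 → Finite (R ⧸ torsionOf R M (t • m))) :
    Finite (R ⧸ torsionOf R M m) := by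
  let μ := (LinearMap.lsmul R M r).domRestrict (R ∙ m)
  have : Finite (LinearMap.range μ) := by
    rw [LinearMap.range_domRestrict, Submodule.map_span, Set.image_singleton,
      LinearMap.lsmul_apply]
    exact .of_equiv _ (quotTorsionOfEquivSpanSingleton R M (r • m)).toEquiv
  have : Finite (LinearMap.ker μ) := by
    refine finite_of_finite_quotient_torsionOf (R := R) fun ⟨⟨x, hx⟩, hμx⟩ => ?_
    obtain ⟨t, rfl⟩ := mem_span_singleton.mp hx
    have htorsion : torsionOf R (LinearMap.ker μ) ⟨⟨t • m, hx⟩, hμx⟩ =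
        torsionOf R M (t • m) := by
      ext s
      simp [mem_torsionOf_iff, Subtype.ext_iff]
    exact htorsion ▸ hker t (LinearMap.mem_ker.mp hμx)
  have : Finite (R ∙ m) := μ.finite_of_finite_ker_of_finite_range
  exact .of_equiv _ (quotTorsionOfEquivSpanSingleton R M m).symm.toEquiv

theorem isPrime_torsionOf_of_maximal [IsNoetherian R M] {m : M}
    (hm : Infinite (R ⧸ torsionOf R M m))
    (hmax : ∀ y : M, torsionOf R M m < torsionOf R M y → Finite (R ⧸ torsionOf R M y)) :
    (torsionOf R M m).IsPrime := by
  refine ⟨fun htop => ?_, fun {r s} hrs => or_iff_not_imp_left.mpr fun hr => ?_⟩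
  · rw [htop] at hm
    exact not_finite (R ⧸ (⊤ : Ideal R))
  have hstrict : ∀ t : R, r • t • m = 0 → torsionOf R M m < torsionOf R M (t • m) :=
    fun t ht => (torsionOf_le_torsionOf_smul m t).lt_of_ne fun h => hr (h ▸ ht)
  have heq : torsionOf R M (r • m) = torsionOf R M m := by
    by_contra hne
    have := finite_quotient_torsionOf_of_smul
      (hmax _ ((torsionOf_le_torsionOf_smul m r).lt_of_ne' hne)) fun t ht => hmax _ (hstrict t ht)
    exact not_finite (R ⧸ torsionOf R M m)
  rw [← heq, mem_torsionOf_iff, smul_smul, mul_comm]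
  exact hrs

theorem exists_isPrime_torsionOf_infinite_quotient [IsNoetherianRing R] [Module.Finite R M]
    [Infinite M] : ∃ m : M, (torsionOf R M m).IsPrime ∧ Infinite (R ⧸ torsionOf R M m) := by
  obtain ⟨m₀, hm₀⟩ : ∃ x : M, Infinite (R ⧸ torsionOf R M x) := by
    by_contra! h
    have := finite_of_finite_quotient_torsionOf h
    exact not_finite M
  obtain ⟨m, hm, hmax⟩ := (InvImage.wf (torsionOf R M) wellFounded_gt).has_min
    {x | Infinite (R ⧸ torsionOf R M x)} ⟨m₀, hm₀⟩
  refine ⟨m, isPrime_torsionOf_of_maximal hm fun y hlt => ?_, hm⟩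
  exact not_infinite_iff_finite.mp fun hy => hmax y hy hlt

end Torsion

theorem LinearMap.comp_mulVec_map_algebraMap {R S m n : Type*} [CommSemiring R] [Semiring S]
    [Algebra R S] [Fintype n] (φ : S →ₗ[R] R) (A : Matrix m n R) (y : n → S) :
    φ ∘ (A.map (algebraMap R S) *ᵥ y) = A *ᵥ (φ ∘ y) := by
  ext i
  simp [Matrix.mulVec, dotProduct, ← Algebra.smul_def]

theorem isRigid_of_isDomain_of_infinite {D : Type*} [CommRing D] [IsDomain D] [Infinite D]
    {n : ℕ} (hn : n ≠ 0) : IsRigid D n := by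
  intro f
  obtain ⟨y, hy, hy0⟩ : ∃ y ∈ LinearMap.ker f, y ≠ 0 := by
    refine (Submodule.ne_bot_iff _).mp fun h => ?_
    have := le_of_fin_injective D f (LinearMap.ker_eq_bot.mp h)
    omega
  exact Set.infinite_of_injective_forall_mem (smul_left_injective D hy0) fun c =>
    (LinearMap.ker f).smul_mem c hy

theorem isRigid_of_isRigid_quotient_torsionOf {R : Type*} [CommRing R] {n : ℕ} (a : R)
    (h : IsRigid (R ⧸ torsionOf R R a) n) : IsRigid R n := by
  intro f
  let ι : R ⧸ torsionOf R R a →ₗ[R] R :=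
    (R ∙ a).subtype ∘ₗ (quotTorsionOfEquivSpanSingleton R R a).toLinearMap
  have hι : Function.Injective ι := Subtype.val_injective.comp (LinearEquiv.injective _)
  let g := Matrix.toLin' ((LinearMap.toMatrix' f).map (algebraMap R (R ⧸ torsionOf R R a)))
  have hmaps : Set.MapsTo (ι ∘ ·) (LinearMap.ker g : Set (Fin n → R ⧸ torsionOf R R a))
      (LinearMap.ker f) := fun y hy => by
    rw [SetLike.mem_coe, LinearMap.mem_ker] at hy ⊢
    rw [← Matrix.toLin'_toMatrix' f, Matrix.toLin'_apply,
      ← LinearMap.comp_mulVec_map_algebraMap, ← Matrix.toLin'_apply, hy]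
    ext
    simp
  exact ((h g).image hι.comp_left.injOn).mono hmaps.image_subset

/-- An infinite commutative noetherian ring is `n`-rigid for
every positive integer `n`. -/
theorem infinite_comm_noetherian_isRigid (R : Type*) [CommRing R] [Infinite R]
    [IsNoetherianRing R] : ∀ n : ℕ, 1 ≤ n → IsRigid R n := by
  intro n hn
  obtain ⟨a, hprime, hinf⟩ := exists_isPrime_torsionOf_infinite_quotient (R := R) (M := R)
  exact isRigid_of_isRigid_quotient_torsionOf a
    (isRigid_of_isDomain_of_infinite (Nat.one_le_iff_ne_zero.mp hn))
end
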